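/- arXiv:2302.04637 — 2 statements merged into one kernel-verified Lean document; each statement's English description precedes it below -/
import Mathlib

section
/- There exists a constant C, depending only on α and C₀, such that E₂ is differentiable on [0,T] and for all t ∈ [0,T]: E₂′(t) ≤ (−2λ + (C/N) S_{α+1}(t)) E₂(t) + (C/N) (1 + S_{α+1}(t)/N) S_α(t) √(E₂(t)). -/
open scoped BigOperators RealInnerProductSpace

/-- The minimal distance between pairwise distinct points `X 1, …, X N`. -/
noncomputable def dmin {N : ℕ} (X : Fin N → EuclideanSpace ℝ (Fin 3)) : ℝ :=
  sInf {r : ℝ | ∃ i j : Fin N, i ≠ j ∧ r = dist (X i) (X j)}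

/-- The distance `d_{ij} = |X_i - X_j|` for `i ≠ j`, with the convention `d_{ii} = d_min`. -/
noncomputable def dd {N : ℕ} (X : Fin N → EuclideanSpace ℝ (Fin 3)) (i j : Fin N) : ℝ :=
  if i = j then dmin X else dist (X i) (X j)

/-- `S_β = max_i ∑_j d_{ij}^{-β}`. -/
noncomputable def Ssum {N : ℕ} (X : Fin N → EuclideanSpace ℝ (Fin 3)) (β : ℝ) : ℝ :=
  ⨆ i : Fin N, ∑ j : Fin N, (dd X i j) ^ (-β)

/-- The mean-field velocity `Ṽ_i(t) = (1/N) ∑_{j ≠ i} K(X_i(t) - X_j(t))`. -/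
noncomputable def Vtilde {N : ℕ} (K : EuclideanSpace ℝ (Fin 3) → EuclideanSpace ℝ (Fin 3))
    (X : ℝ → Fin N → EuclideanSpace ℝ (Fin 3)) (t : ℝ) (i : Fin N) :
    EuclideanSpace ℝ (Fin 3) :=
  (N : ℝ)⁻¹ • ∑ j ∈ Finset.univ.erase i, K (X t i - X t j)

/-- The modulated energy `E₂(t) = (1/(2N)) ∑_i |V_i(t) - Ṽ_i(t)|²`. -/
noncomputable def E₂ {N : ℕ} (K : EuclideanSpace ℝ (Fin 3) → EuclideanSpace ℝ (Fin 3))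
    (X V : ℝ → Fin N → EuclideanSpace ℝ (Fin 3)) (t : ℝ) : ℝ :=
  (1 / (2 * (N : ℝ))) * ∑ i : Fin N, ‖V t i - Vtilde K X t i‖ ^ 2

section aux
variable {N : ℕ} {X : Fin N → EuclideanSpace ℝ (Fin 3)}

lemma dmin_pos (hN : 2 ≤ N) (hX : Function.Injective X) : 0 < dmin X := by
  set S : Set ℝ := {r : ℝ | ∃ i j : Fin N, i ≠ j ∧ r = dist (X i) (X j)} with hS
  have hne : S.Nonempty := by
    refine ⟨dist (X ⟨0, by omega⟩) (X ⟨1, by omega⟩), ⟨0, by omega⟩, ⟨1, by omega⟩, ?_, rfl⟩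
    simp [Fin.ext_iff]
  have hfin : S.Finite := by
    apply (Set.finite_range (fun p : Fin N × Fin N => dist (X p.1) (X p.2))).subset
    rintro r ⟨i, j, -, rfl⟩
    exact ⟨(i, j), rfl⟩
  obtain ⟨i, j, hij, hr⟩ := hne.csInf_mem hfin
  have : dmin X = dist (X i) (X j) := hr
  rw [this]
  exact dist_pos.2 fun h => hij (hX h)

lemma dd_pos (hN : 2 ≤ N) (hX : Function.Injective X) (i j : Fin N) : 0 < dd X i j := by
  unfold dd
  split_ifs with h
  · exact dmin_pos hN hX
  · exact dist_pos.2 fun hh => h (hX hh)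

lemma dd_symm (i j : Fin N) : dd X i j = dd X j i := by
  unfold dd
  rcases eq_or_ne i j with h | h
  · simp [h]
  · simp [h, h.symm, dist_comm]

lemma sum_le_Ssum (β : ℝ) (i : Fin N) : ∑ j, dd X i j ^ (-β) ≤ Ssum X β :=
  le_ciSup (f := fun i : Fin N => ∑ j, dd X i j ^ (-β)) (Set.finite_range _).bddAbove i

lemma Ssum_nonneg (hN : 2 ≤ N) (hX : Function.Injective X) (β : ℝ) : 0 ≤ Ssum X β := by
  refine le_trans ?_ (sum_le_Ssum β ⟨0, by omega⟩)
  exact Finset.sum_nonneg fun j _ => Real.rpow_nonneg (dd_pos hN hX _ _).le _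

end aux


set_option maxHeartbeats 1000000 in
/-- For the second-order binary system `Ẋ_i = V_i`,
`V̇_i = λ(-V_i + (1/N) ∑_{j≠i} K(X_i - X_j))` with a `C¹` kernel `K` satisfying
`|K(x)| ≤ C₀|x|^{-α}`, `‖DK(x)‖ ≤ C₀|x|^{-α-1}`, there is a constant `C`, depending only
on `α` and `C₀`, such that the modulated energy `E₂` is differentiable on `[0,T]` with
`E₂′(t) ≤ (-2λ + (C/N) S_{α+1}(t)) E₂(t) + (C/N)(1 + S_{α+1}(t)/N) S_α(t) √(E₂(t))`. -/
theorem stmt10 (α C₀ : ℝ) (hα : 0 < α) (hC₀ : 0 < C₀) :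
    ∃ C : ℝ, ∀ (N : ℕ), 2 ≤ N → ∀ (lam T : ℝ), 0 < lam → 0 < T →
      ∀ K : EuclideanSpace ℝ (Fin 3) → EuclideanSpace ℝ (Fin 3),
        ContDiffOn ℝ 1 K {x : EuclideanSpace ℝ (Fin 3) | x ≠ 0} →
        (∀ x : EuclideanSpace ℝ (Fin 3), x ≠ 0 → ‖K x‖ ≤ C₀ * ‖x‖ ^ (-α)) →
        (∀ x : EuclideanSpace ℝ (Fin 3), x ≠ 0 → ‖fderiv ℝ K x‖ ≤ C₀ * ‖x‖ ^ (-(α + 1))) →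
        ∀ X V : ℝ → Fin N → EuclideanSpace ℝ (Fin 3),
          (∀ t ∈ Set.Icc (0 : ℝ) T, Function.Injective (X t)) →
          (∀ i : Fin N, ∀ t ∈ Set.Icc (0 : ℝ) T,
            HasDerivWithinAt (fun s => X s i) (V t i) (Set.Icc (0 : ℝ) T) t) →
          (∀ i : Fin N, ∀ t ∈ Set.Icc (0 : ℝ) T,
            HasDerivWithinAt (fun s => V s i)
              (lam • (-(V t i) + Vtilde K X t i)) (Set.Icc (0 : ℝ) T) t) →
          ∀ t ∈ Set.Icc (0 : ℝ) T, ∃ E₂' : ℝ,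
            HasDerivWithinAt (E₂ K X V) E₂' (Set.Icc (0 : ℝ) T) t ∧
            E₂' ≤ (-(2 * lam) + (C / N) * Ssum (X t) (α + 1)) * E₂ K X V t +
              (C / N) * (1 + Ssum (X t) (α + 1) / N) * Ssum (X t) α *
                Real.sqrt (E₂ K X V t) := by
  refine ⟨4 * C₀ + 4 * C₀ ^ 2, ?_⟩
  intro N hN lam T hlam hT K hK hKb hDKb X V hinj hXd hVd t ht
  set s : Set ℝ := Set.Icc (0 : ℝ) T with hs
  have hNpos : (0 : ℝ) < N := by
    have : (0 : ℕ) < N := by omega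
    exact_mod_cast this
  have hN0 : (N : ℝ) ≠ 0 := ne_of_gt hNpos
  have hinjt := hinj t ht
  have hXne : ∀ i j : Fin N, i ≠ j → X t i - X t j ≠ 0 := fun i j hij =>
    sub_ne_zero.2 fun h => hij (hinjt h)
  have hopen : IsOpen {x : EuclideanSpace ℝ (Fin 3) | x ≠ 0} := isOpen_compl_singleton
  have hKdiff : ∀ x : EuclideanSpace ℝ (Fin 3), x ≠ 0 → HasFDerivAt K (fderiv ℝ K x) x :=
    fun x hx => ((hK.contDiffAt (hopen.mem_nhds hx)).differentiableAt one_ne_zero).hasFDerivAt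
  set W : Fin N → EuclideanSpace ℝ (Fin 3) := fun i => V t i - Vtilde K X t i with hWdef
  set A : Fin N → Fin N → (EuclideanSpace ℝ (Fin 3) →L[ℝ] EuclideanSpace ℝ (Fin 3)) :=
    fun i j => fderiv ℝ K (X t i - X t j) with hAdef
  set Vt' : Fin N → EuclideanSpace ℝ (Fin 3) :=
    fun i => (N : ℝ)⁻¹ • ∑ j ∈ Finset.univ.erase i, A i j (V t i - V t j) with hVt'def
  set w : Fin N → ℝ := fun i => ‖W i‖ with hwdef
  -- derivative of Vtilde
  have hVt'd : ∀ i, HasDerivWithinAt (fun u => Vtilde K X u i) (Vt' i) s t := by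
    intro i
    have hterm : ∀ j ∈ Finset.univ.erase i,
        HasDerivWithinAt (fun u => K (X u i - X u j)) (A i j (V t i - V t j)) s t := by
      intro j hj
      have hij : i ≠ j := (Finset.ne_of_mem_erase hj).symm
      have h1 : HasDerivWithinAt (fun u => X u i - X u j) (V t i - V t j) s t :=
        (hXd i t ht).sub (hXd j t ht)
      exact (hKdiff _ (hXne i j hij)).comp_hasDerivWithinAt t h1
    simpa only [Vtilde, Pi.smul_def] using (HasDerivWithinAt.fun_sum hterm).const_smul ((N : ℝ)⁻¹)
  -- derivative of W
  have hWd : ∀ i, HasDerivWithinAt (fun u => V u i - Vtilde K X u i)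
      (-(lam • W i) - Vt' i) s t := by
    intro i
    have h := (hVd i t ht).sub (hVt'd i)
    have heq : lam • (-(V t i) + Vtilde K X t i) - Vt' i = -(lam • W i) - Vt' i := by
      simp only [hWdef]
      module
    rwa [heq] at h
  -- derivative of E₂
  have hEeq : E₂ K X V = fun u => (1 / (2 * (N : ℝ))) *
      ∑ i, ⟪V u i - Vtilde K X u i, V u i - Vtilde K X u i⟫ := by
    funext u
    unfold E₂
    congr 1
    exact Finset.sum_congr rfl fun i _ => (real_inner_self_eq_norm_sq _).symm
  have hEd : HasDerivWithinAt (E₂ K X V)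
      ((1 / (2 * (N : ℝ))) * ∑ i,
        (⟪W i, -(lam • W i) - Vt' i⟫ + ⟪-(lam • W i) - Vt' i, W i⟫)) s t := by
    rw [hEeq]
    exact (HasDerivWithinAt.fun_sum fun i _ => (hWd i).inner ℝ (hWd i)).const_mul _
  refine ⟨_, hEd, ?_⟩
  -- abbreviations
  set Sa : ℝ := Ssum (X t) α with hSadef
  set Sa1 : ℝ := Ssum (X t) (α + 1) with hSa1def
  set g : Fin N → Fin N → ℝ := fun i j => dd (X t) i j ^ (-(α + 1)) with hgdef
  have hgnn : ∀ i j, 0 ≤ g i j := fun i j => Real.rpow_nonneg (dd_pos hN hinjt i j).le _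
  have hrow : ∀ i, ∑ j, g i j ≤ Sa1 := fun i => sum_le_Ssum (α + 1) i
  have hSann : 0 ≤ Sa := Ssum_nonneg hN hinjt α
  have hSa1nn : 0 ≤ Sa1 := Ssum_nonneg hN hinjt (α + 1)
  have hwnn : ∀ i, 0 ≤ w i := fun i => norm_nonneg _
  have hdd_norm : ∀ i j : Fin N, i ≠ j → dd (X t) i j = ‖X t i - X t j‖ := by
    intro i j h
    unfold dd
    rw [if_neg h, dist_eq_norm]
  have hAb : ∀ i j : Fin N, i ≠ j → ‖A i j‖ ≤ C₀ * g i j := by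
    intro i j h
    show ‖fderiv ℝ K (X t i - X t j)‖ ≤ C₀ * dd (X t) i j ^ (-(α + 1))
    rw [hdd_norm i j h]
    exact hDKb _ (hXne i j h)
  have hKbnd : ∀ i j : Fin N, i ≠ j → ‖K (X t i - X t j)‖ ≤ C₀ * dd (X t) i j ^ (-α) := by
    intro i j h
    rw [hdd_norm i j h]
    exact hKb _ (hXne i j h)
  -- bound on Vtilde
  have hVtb : ∀ i, ‖Vtilde K X t i‖ ≤ C₀ / N * Sa := by
    intro i
    have h0 : ‖Vtilde K X t i‖ =
        (N : ℝ)⁻¹ * ‖∑ j ∈ Finset.univ.erase i, K (X t i - X t j)‖ := by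
      simp only [Vtilde, norm_smul, norm_inv, Real.norm_natCast]
    rw [h0]
    have h1 : ‖∑ j ∈ Finset.univ.erase i, K (X t i - X t j)‖
        ≤ ∑ j ∈ Finset.univ.erase i, C₀ * dd (X t) i j ^ (-α) := by
      refine (norm_sum_le _ _).trans (Finset.sum_le_sum ?_)
      intro j hj
      exact hKbnd i j (Finset.ne_of_mem_erase hj).symm
    have h2 : ∑ j ∈ Finset.univ.erase i, C₀ * dd (X t) i j ^ (-α) ≤ C₀ * Sa := by
      calc ∑ j ∈ Finset.univ.erase i, C₀ * dd (X t) i j ^ (-α)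
          ≤ ∑ j, C₀ * dd (X t) i j ^ (-α) :=
            Finset.sum_le_sum_of_subset_of_nonneg (Finset.erase_subset _ _)
              (fun j _ _ => mul_nonneg hC₀.le (Real.rpow_nonneg (dd_pos hN hinjt i j).le _))
        _ = C₀ * ∑ j, dd (X t) i j ^ (-α) := (Finset.mul_sum _ _ _).symm
        _ ≤ C₀ * Sa := mul_le_mul_of_nonneg_left (sum_le_Ssum α i) hC₀.le
    refine le_trans (mul_le_mul_of_nonneg_left (h1.trans h2) (by positivity)) (le_of_eq (by ring))
  set B : ℝ := 2 * (C₀ / N * Sa) with hBdef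
  have hBnn : 0 ≤ B := by positivity
  have hVdiffb : ∀ i j : Fin N, ‖V t i - V t j‖ ≤ w i + w j + B := by
    intro i j
    have hsplit : V t i - V t j = (W i - W j) + (Vtilde K X t i - Vtilde K X t j) := by
      simp only [hWdef]
      abel
    rw [hsplit]
    have h1 := hVtb i
    have h2 := hVtb j
    calc ‖(W i - W j) + (Vtilde K X t i - Vtilde K X t j)‖
        ≤ ‖W i - W j‖ + ‖Vtilde K X t i - Vtilde K X t j‖ := norm_add_le _ _
      _ ≤ (‖W i‖ + ‖W j‖) + (‖Vtilde K X t i‖ + ‖Vtilde K X t j‖) :=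
          add_le_add (norm_sub_le _ _) (norm_sub_le _ _)
      _ ≤ w i + w j + B := by
          simp only [hwdef, hBdef]
          linarith
  -- bound on Vt'
  have hVt'b : ∀ i, ‖Vt' i‖ ≤ (N : ℝ)⁻¹ * ∑ j, C₀ * g i j * (w i + w j + B) := by
    intro i
    have h0 : ‖Vt' i‖ =
        (N : ℝ)⁻¹ * ‖∑ j ∈ Finset.univ.erase i, A i j (V t i - V t j)‖ := by
      rw [hVt'def]
      simp only [norm_smul, norm_inv, Real.norm_natCast]
    rw [h0]
    refine mul_le_mul_of_nonneg_left ?_ (by positivity)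
    refine (norm_sum_le _ _).trans ?_
    have h1 : ∑ j ∈ Finset.univ.erase i, ‖A i j (V t i - V t j)‖
        ≤ ∑ j ∈ Finset.univ.erase i, C₀ * g i j * (w i + w j + B) := by
      refine Finset.sum_le_sum ?_
      intro j hj
      have hij : i ≠ j := (Finset.ne_of_mem_erase hj).symm
      calc ‖A i j (V t i - V t j)‖ ≤ ‖A i j‖ * ‖V t i - V t j‖ := (A i j).le_opNorm _
        _ ≤ (C₀ * g i j) * (w i + w j + B) := by
            refine mul_le_mul (hAb i j hij) (hVdiffb i j) (norm_nonneg _)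
              (mul_nonneg hC₀.le (hgnn i j))
    refine h1.trans ?_
    refine Finset.sum_le_sum_of_subset_of_nonneg (Finset.erase_subset _ _) ?_
    intro j _ _
    exact mul_nonneg (mul_nonneg hC₀.le (hgnn i j))
      (by linarith [hwnn i, hwnn j, hBnn])
  -- per-term bound on the derivative
  have hper : ∀ i, ⟪W i, -(lam • W i) - Vt' i⟫ + ⟪-(lam • W i) - Vt' i, W i⟫
      ≤ 2 * (-(lam * w i ^ 2) + ‖Vt' i‖ * w i) := by
    intro i
    have h1 : ⟪W i, -(lam • W i) - Vt' i⟫ = ⟪-(lam • W i) - Vt' i, W i⟫ :=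
      real_inner_comm _ _
    have h2 : ⟪-(lam • W i) - Vt' i, W i⟫ = -(lam * w i ^ 2) - ⟪Vt' i, W i⟫ := by
      rw [inner_sub_left, inner_neg_left, real_inner_smul_left, real_inner_self_eq_norm_sq]
    have h3 : -⟪Vt' i, W i⟫ ≤ ‖Vt' i‖ * w i :=
      (neg_le_abs _).trans (abs_real_inner_le_norm _ _)
    rw [h1, h2]
    linarith
  set Q : ℝ := ∑ i, ‖Vt' i‖ * w i with hQdef
  -- first inequality: derivative ≤ -(2 lam) E₂ + Q/N
  have hE2 : E₂ K X V t = (1 / (2 * (N : ℝ))) * ∑ i, w i ^ 2 := rfl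
  have hE2nn : 0 ≤ E₂ K X V t := by
    rw [hE2]
    have : 0 ≤ ∑ i, w i ^ 2 := Finset.sum_nonneg fun i _ => sq_nonneg _
    positivity
  have hstep1 : (1 / (2 * (N : ℝ))) * ∑ i,
        (⟪W i, -(lam • W i) - Vt' i⟫ + ⟪-(lam • W i) - Vt' i, W i⟫)
      ≤ -(2 * lam) * E₂ K X V t + (1 / N) * Q := by
    have hmono : (1 / (2 * (N : ℝ))) * ∑ i,
          (⟪W i, -(lam • W i) - Vt' i⟫ + ⟪-(lam • W i) - Vt' i, W i⟫)
        ≤ (1 / (2 * (N : ℝ))) * ∑ i, 2 * (-(lam * w i ^ 2) + ‖Vt' i‖ * w i) :=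
      mul_le_mul_of_nonneg_left (Finset.sum_le_sum fun i _ => hper i) (by positivity)
    refine hmono.trans (le_of_eq ?_)
    have hexp : ∑ i, 2 * (-(lam * w i ^ 2) + ‖Vt' i‖ * w i)
        = -(2 * lam) * (∑ i, w i ^ 2) + 2 * Q := by
      rw [hQdef, Finset.mul_sum, Finset.mul_sum, ← Finset.sum_add_distrib]
      exact Finset.sum_congr rfl fun i _ => by ring
    rw [hexp, hE2]
    field_simp
  -- bound on Q
  have hQb1 : Q ≤ (N : ℝ)⁻¹ * ∑ i, ∑ j, C₀ * g i j * (w i + w j + B) * w i := by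
    rw [hQdef, Finset.mul_sum]
    refine Finset.sum_le_sum fun i _ => ?_
    have h1 : ‖Vt' i‖ * w i ≤ ((N : ℝ)⁻¹ * ∑ j, C₀ * g i j * (w i + w j + B)) * w i :=
      mul_le_mul_of_nonneg_right (hVt'b i) (hwnn i)
    refine h1.trans (le_of_eq ?_)
    rw [mul_assoc, Finset.sum_mul]
  -- the three component sums
  have hA1 : ∑ i, ∑ j, g i j * w i ^ 2 ≤ Sa1 * ∑ i, w i ^ 2 := by
    rw [Finset.mul_sum]
    refine Finset.sum_le_sum fun i _ => ?_
    rw [← Finset.sum_mul]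
    exact mul_le_mul_of_nonneg_right (hrow i) (sq_nonneg _)
  have hB1 : ∑ i, ∑ j, g i j * w j ^ 2 ≤ Sa1 * ∑ i, w i ^ 2 := by
    rw [Finset.sum_comm, Finset.mul_sum]
    refine Finset.sum_le_sum fun j _ => ?_
    rw [← Finset.sum_mul]
    refine mul_le_mul_of_nonneg_right ?_ (sq_nonneg _)
    calc ∑ i, g i j = ∑ i, g j i := by
          refine Finset.sum_congr rfl fun i _ => ?_
          show dd (X t) i j ^ (-(α + 1)) = dd (X t) j i ^ (-(α + 1))
          rw [dd_symm]
      _ ≤ Sa1 := hrow j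
  have hC1 : ∑ i, ∑ j, g i j * w i ≤ Sa1 * ∑ i, w i := by
    rw [Finset.mul_sum]
    refine Finset.sum_le_sum fun i _ => ?_
    rw [← Finset.sum_mul]
    exact mul_le_mul_of_nonneg_right (hrow i) (hwnn i)
  -- split of the double sum
  have pull : ∀ (c : ℝ) (F : Fin N → Fin N → ℝ),
      ∑ i, ∑ j, c * F i j = c * ∑ i, ∑ j, F i j := by
    intro c F
    simp [Finset.mul_sum]
  have hsplit2 : ∑ i, ∑ j, C₀ * g i j * (w i + w j + B) * w i
      ≤ C₀ * (∑ i, ∑ j, g i j * w i ^ 2)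
        + (C₀ / 2) * (∑ i, ∑ j, g i j * w i ^ 2)
        + (C₀ / 2) * (∑ i, ∑ j, g i j * w j ^ 2)
        + (C₀ * B) * (∑ i, ∑ j, g i j * w i) := by
    have hterm : ∀ i j, C₀ * g i j * (w i + w j + B) * w i
        ≤ C₀ * (g i j * w i ^ 2) + (C₀ / 2) * (g i j * w i ^ 2)
          + (C₀ / 2) * (g i j * w j ^ 2) + (C₀ * B) * (g i j * w i) := by
      intro i j
      have hg := hgnn i j
      nlinarith [mul_nonneg (mul_nonneg hC₀.le hg) (sq_nonneg (w i - w j))]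
    calc ∑ i, ∑ j, C₀ * g i j * (w i + w j + B) * w i
        ≤ ∑ i, ∑ j, (C₀ * (g i j * w i ^ 2) + (C₀ / 2) * (g i j * w i ^ 2)
            + (C₀ / 2) * (g i j * w j ^ 2) + (C₀ * B) * (g i j * w i)) :=
          Finset.sum_le_sum fun i _ => Finset.sum_le_sum fun j _ => hterm i j
      _ = _ := by
          simp only [Finset.sum_add_distrib]
          rw [pull C₀ (fun i j => g i j * w i ^ 2),
            pull (C₀ / 2) (fun i j => g i j * w i ^ 2),
            pull (C₀ / 2) (fun i j => g i j * w j ^ 2),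
            pull (C₀ * B) (fun i j => g i j * w i)]
  -- sums of w and w²
  set T2 : ℝ := ∑ i, w i ^ 2 with hT2def
  set Tw : ℝ := ∑ i, w i with hTwdef
  have hT2nn : 0 ≤ T2 := Finset.sum_nonneg fun i _ => sq_nonneg _
  have hTwnn : 0 ≤ Tw := Finset.sum_nonneg fun i _ => hwnn i
  have hT2E : T2 = 2 * N * E₂ K X V t := by
    rw [hE2]
    field_simp
  have hsq : Real.sqrt (E₂ K X V t) ^ 2 = E₂ K X V t := Real.sq_sqrt hE2nn
  have hsqnn : 0 ≤ Real.sqrt (E₂ K X V t) := Real.sqrt_nonneg _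
  have hTwb : Tw ≤ 2 * N * Real.sqrt (E₂ K X V t) := by
    have h1 : Tw ^ 2 ≤ N * T2 := by
      have h := sq_sum_le_card_mul_sum_sq (s := (Finset.univ : Finset (Fin N))) (f := w)
      simpa [hT2def, hTwdef] using h
    have h3 : Tw ^ 2 ≤ (2 * N * Real.sqrt (E₂ K X V t)) ^ 2 := by
      have : (2 * (N : ℝ) * Real.sqrt (E₂ K X V t)) ^ 2
          = 4 * N ^ 2 * E₂ K X V t := by
        rw [mul_pow, mul_pow, hsq]
        ring
      rw [this]
      nlinarith [hT2E, h1, hE2nn, hNpos, mul_nonneg (mul_nonneg hNpos.le hNpos.le) hE2nn]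
    have h4 : (0 : ℝ) ≤ 2 * N * Real.sqrt (E₂ K X V t) := by positivity
    calc Tw = Real.sqrt (Tw ^ 2) := (Real.sqrt_sq hTwnn).symm
      _ ≤ Real.sqrt ((2 * N * Real.sqrt (E₂ K X V t)) ^ 2) := Real.sqrt_le_sqrt h3
      _ = 2 * N * Real.sqrt (E₂ K X V t) := Real.sqrt_sq h4
  -- assembling the bound on Q
  have hQfinal : Q ≤ 4 * C₀ * Sa1 * E₂ K X V t
      + 4 * C₀ ^ 2 / N * Sa * Sa1 * Real.sqrt (E₂ K X V t) := by
    have k1 := mul_le_mul_of_nonneg_left hA1 hC₀.le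
    have k2 := mul_le_mul_of_nonneg_left hA1 (by positivity : (0:ℝ) ≤ C₀ / 2)
    have k3 := mul_le_mul_of_nonneg_left hB1 (by positivity : (0:ℝ) ≤ C₀ / 2)
    have k4 := mul_le_mul_of_nonneg_left hC1 (mul_nonneg hC₀.le hBnn)
    have hmid : ∑ i, ∑ j, C₀ * g i j * (w i + w j + B) * w i
        ≤ 2 * C₀ * (Sa1 * T2) + C₀ * B * (Sa1 * Tw) := by
      rw [hT2def, hTwdef] at *
      linarith
    have hQb2 : Q ≤ (N : ℝ)⁻¹ * (2 * C₀ * (Sa1 * T2) + C₀ * B * (Sa1 * Tw)) :=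
      hQb1.trans (mul_le_mul_of_nonneg_left hmid (by positivity))
    refine hQb2.trans ?_
    have hBSa1Tw : C₀ * B * (Sa1 * Tw)
        ≤ C₀ * B * (Sa1 * (2 * N * Real.sqrt (E₂ K X V t))) := by
      refine mul_le_mul_of_nonneg_left ?_ (mul_nonneg hC₀.le hBnn)
      exact mul_le_mul_of_nonneg_left hTwb hSa1nn
    have h1 : (N : ℝ)⁻¹ * (2 * C₀ * (Sa1 * T2) + C₀ * B * (Sa1 * Tw))
        ≤ (N : ℝ)⁻¹ * (2 * C₀ * (Sa1 * (2 * N * E₂ K X V t))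
          + C₀ * B * (Sa1 * (2 * N * Real.sqrt (E₂ K X V t)))) := by
      refine mul_le_mul_of_nonneg_left ?_ (by positivity)
      rw [hT2E] at *
      linarith
    refine h1.trans (le_of_eq ?_)
    rw [hBdef]
    field_simp
    ring
  -- final assembly
  have hid : (-(2 * lam) + ((4 * C₀ + 4 * C₀ ^ 2) / N) * Sa1) * E₂ K X V t +
      ((4 * C₀ + 4 * C₀ ^ 2) / N) * (1 + Sa1 / N) * Sa * Real.sqrt (E₂ K X V t)
      = (-(2 * lam) * E₂ K X V t + (1 / N) * (4 * C₀ * Sa1 * E₂ K X V t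
          + 4 * C₀ ^ 2 / N * Sa * Sa1 * Real.sqrt (E₂ K X V t)))
        + (4 * C₀ ^ 2 / N) * (Sa1 * E₂ K X V t)
        + ((4 * C₀ + 4 * C₀ ^ 2) / N) * (Sa * Real.sqrt (E₂ K X V t))
        + (4 * C₀ / N ^ 2) * (Sa * Sa1 * Real.sqrt (E₂ K X V t)) := by
    field_simp
    ring
  have hQdiv : (1 / (N : ℝ)) * Q ≤ (1 / N) * (4 * C₀ * Sa1 * E₂ K X V t
      + 4 * C₀ ^ 2 / N * Sa * Sa1 * Real.sqrt (E₂ K X V t)) :=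
    mul_le_mul_of_nonneg_left hQfinal (by positivity)
  have e1 : 0 ≤ (4 * C₀ ^ 2 / (N : ℝ)) * (Sa1 * E₂ K X V t) :=
    mul_nonneg (by positivity) (mul_nonneg hSa1nn hE2nn)
  have e2 : 0 ≤ ((4 * C₀ + 4 * C₀ ^ 2) / (N : ℝ)) * (Sa * Real.sqrt (E₂ K X V t)) :=
    mul_nonneg (by positivity) (mul_nonneg hSann (Real.sqrt_nonneg _))
  have e3 : 0 ≤ (4 * C₀ / (N : ℝ) ^ 2) * (Sa * Sa1 * Real.sqrt (E₂ K X V t)) :=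
    mul_nonneg (by positivity) (mul_nonneg (mul_nonneg hSann hSa1nn) (Real.sqrt_nonneg _))
  rw [hid]
  linarith
end

section
/- Assume additionally that there is C₁ > 0 with S_{α+1}(t)/N ≤ C₁ and S_α(t)/N ≤ C₁ for all t ∈ [0,T]. Then there exist constants C and C′, depending only on α, C₀ and C₁, such that if λ ≥ C then for all t ∈ [0,T]: N^{−1/2} (Σ_{i=1}^N |V_i(t) − Ṽ_i(t)|²)^{1/2} ≤ N^{−1/2} (Σ_{i=1}^N |V_i(0) − Ṽ_i(0)|²)^{1/2} e^{−λt/2} + C′ min{1/λ, t}. -/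
open scoped BigOperators

open Finset in
theorem sum_erase_comm' {n : ℕ} (F : Fin n → Fin n → ℝ) :
    ∑ i, ∑ j ∈ univ.erase i, F i j = ∑ j, ∑ i ∈ univ.erase j, F i j := by
  have h : ∀ i : Fin n, ∑ j ∈ univ.erase i, F i j
      = ∑ j, if j = i then 0 else F i j := by
    intro i
    rw [← Finset.sum_erase (a := i) univ (f := fun j => if j = i then 0 else F i j) (by simp)]
    exact Finset.sum_congr rfl fun j hj => by simp [Finset.ne_of_mem_erase hj]
  have h2 : ∀ j : Fin n, ∑ i ∈ univ.erase j, F i j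
      = ∑ i, if j = i then 0 else F i j := by
    intro j
    rw [← Finset.sum_erase (a := j) univ (f := fun i => if j = i then 0 else F i j) (by simp)]
    exact Finset.sum_congr rfl fun i hi => by simp [(Finset.ne_of_mem_erase hi).symm]
  simp_rw [h, h2]
  exact Finset.sum_comm

open Finset in
theorem key_est {n : ℕ} (q : Fin n → Fin n → ℝ) (w : Fin n → ℝ) (Q B2 : ℝ)
    (hq : ∀ i j, 0 ≤ q i j) (hqs : ∀ i j, q i j = q j i)
    (hrow : ∀ i, ∑ j ∈ univ.erase i, q i j ≤ Q) (hw : ∀ i, 0 ≤ w i)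
    (hQ : 0 ≤ Q) (hB2 : 0 ≤ B2) :
    ∑ i, (∑ j ∈ univ.erase i, q i j * (w i + w j + B2)) * w i
      ≤ 2 * Q * (∑ i, w i ^ 2)
        + B2 * Q * (Real.sqrt n * Real.sqrt (∑ i, w i ^ 2)) := by
  set S := ∑ i, w i ^ 2 with hS
  have hS0 : 0 ≤ S := sum_nonneg fun i _ => sq_nonneg _
  have hsum_w : ∑ i, w i ≤ Real.sqrt n * Real.sqrt S := by
    have hcs := Finset.sum_mul_sq_le_sq_mul_sq univ (fun _ => (1:ℝ)) w
    simp only [one_pow, one_mul] at hcs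
    have hn : (∑ _i : Fin n, (1:ℝ)) = n := by simp
    rw [hn] at hcs
    have h1 : ∑ i, w i = Real.sqrt ((∑ i, w i) ^ 2) :=
      (Real.sqrt_sq (sum_nonneg fun i _ => hw i)).symm
    rw [h1, ← Real.sqrt_mul (by positivity : (0:ℝ) ≤ (n:ℝ)) S]
    exact Real.sqrt_le_sqrt hcs
  have hA1 : ∑ i, (∑ j ∈ univ.erase i, q i j) * w i ^ 2 ≤ Q * S := by
    rw [hS, Finset.mul_sum]
    exact sum_le_sum fun i _ => mul_le_mul_of_nonneg_right (hrow i) (sq_nonneg _)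
  have hA1' : ∑ i, ∑ j ∈ univ.erase i, q i j * w i ^ 2 ≤ Q * S := by
    calc ∑ i, ∑ j ∈ univ.erase i, q i j * w i ^ 2
        = ∑ i, (∑ j ∈ univ.erase i, q i j) * w i ^ 2 :=
          sum_congr rfl fun i _ => by rw [Finset.sum_mul]
      _ ≤ Q * S := hA1
  have hA2' : ∑ i, ∑ j ∈ univ.erase i, q i j * w j ^ 2 ≤ Q * S := by
    rw [sum_erase_comm' (fun i j => q i j * w j ^ 2)]
    calc ∑ j, ∑ i ∈ univ.erase j, q i j * w j ^ 2
        = ∑ j, (∑ i ∈ univ.erase j, q j i) * w j ^ 2 := by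
          refine sum_congr rfl fun j _ => ?_
          rw [Finset.sum_mul]
          exact sum_congr rfl fun i _ => by rw [hqs i j]
      _ ≤ ∑ j, Q * w j ^ 2 := sum_le_sum fun j _ =>
          mul_le_mul_of_nonneg_right (hrow j) (sq_nonneg _)
      _ = Q * S := by rw [hS, Finset.mul_sum]
  have hA2 : ∑ i, ∑ j ∈ univ.erase i, q i j * w j * w i ≤ Q * S := by
    calc ∑ i, ∑ j ∈ univ.erase i, q i j * w j * w i
        ≤ ∑ i, ∑ j ∈ univ.erase i, (q i j * w i ^ 2 + q i j * w j ^ 2) / 2 := by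
          refine sum_le_sum fun i _ => sum_le_sum fun j _ => ?_
          nlinarith [mul_nonneg (hq i j) (sq_nonneg (w i - w j))]
      _ = ((∑ i, ∑ j ∈ univ.erase i, q i j * w i ^ 2)
            + ∑ i, ∑ j ∈ univ.erase i, q i j * w j ^ 2) / 2 := by
          rw [← Finset.sum_add_distrib, Finset.sum_div]
          refine sum_congr rfl fun i _ => ?_
          rw [← Finset.sum_add_distrib, Finset.sum_div]
      _ ≤ (Q * S + Q * S) / 2 := by
          have := hA1'; have := hA2'; linarith
      _ = Q * S := by ring
  have hA3 : ∑ i, (∑ j ∈ univ.erase i, q i j * B2) * w i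
      ≤ B2 * Q * (Real.sqrt n * Real.sqrt S) := by
    calc ∑ i, (∑ j ∈ univ.erase i, q i j * B2) * w i
        = ∑ i, B2 * ((∑ j ∈ univ.erase i, q i j) * w i) := by
          refine sum_congr rfl fun i _ => ?_
          rw [Finset.sum_mul, Finset.sum_mul, Finset.mul_sum]
          exact sum_congr rfl fun j _ => by ring
      _ ≤ ∑ i, B2 * (Q * w i) := sum_le_sum fun i _ =>
          mul_le_mul_of_nonneg_left (mul_le_mul_of_nonneg_right (hrow i) (hw i)) hB2
      _ = B2 * Q * ∑ i, w i := by
          rw [← Finset.mul_sum, Finset.mul_sum, Finset.mul_sum]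
          exact sum_congr rfl fun i _ => by ring
      _ ≤ B2 * Q * (Real.sqrt n * Real.sqrt S) :=
          mul_le_mul_of_nonneg_left hsum_w (by positivity)
  have hexp : ∑ i, (∑ j ∈ univ.erase i, q i j * (w i + w j + B2)) * w i
      = (∑ i, (∑ j ∈ univ.erase i, q i j) * w i ^ 2)
        + (∑ i, ∑ j ∈ univ.erase i, q i j * w j * w i)
        + ∑ i, (∑ j ∈ univ.erase i, q i j * B2) * w i := by
    rw [← Finset.sum_add_distrib, ← Finset.sum_add_distrib]
    refine sum_congr rfl fun i _ => ?_
    rw [Finset.sum_mul, Finset.sum_mul, Finset.sum_mul, ← Finset.sum_add_distrib,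
      ← Finset.sum_add_distrib]
    exact sum_congr rfl fun j _ => by ring
  rw [hexp]
  linarith

set_option maxHeartbeats 2000000 in
/-- For the second-order binary system `Ẋ_i = V_i`,
`V̇_i = λ(-V_i + (1/N) ∑_{j≠i} K(X_i - X_j))` with a `C¹` kernel `K` satisfying
`|K(x)| ≤ C₀|x|^{-α}`, `‖DK(x)‖ ≤ C₀|x|^{-α-1}`, and under the extra assumption
`S_{α+1}(t)/N ≤ C₁`, `S_α(t)/N ≤ C₁` on `[0,T]`, there are constants `C, C′` depending
only on `α, C₀, C₁`, such that if `λ ≥ C` then for all `t ∈ [0,T]`: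
`N^{-1/2} (∑_i |V_i(t) - Ṽ_i(t)|²)^{1/2}
  ≤ N^{-1/2} (∑_i |V_i(0) - Ṽ_i(0)|²)^{1/2} e^{-λt/2} + C′ min{1/λ, t}`. -/
theorem stmt11 (α C₀ C₁ : ℝ) (hα : 0 < α) (hC₀ : 0 < C₀) (hC₁ : 0 < C₁) :
    ∃ C C' : ℝ, ∀ (N : ℕ), 2 ≤ N → ∀ (lam T : ℝ), 0 < lam → 0 < T →
      ∀ K : EuclideanSpace ℝ (Fin 3) → EuclideanSpace ℝ (Fin 3),
        ContDiffOn ℝ 1 K {x : EuclideanSpace ℝ (Fin 3) | x ≠ 0} →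
        (∀ x : EuclideanSpace ℝ (Fin 3), x ≠ 0 → ‖K x‖ ≤ C₀ * ‖x‖ ^ (-α)) →
        (∀ x : EuclideanSpace ℝ (Fin 3), x ≠ 0 → ‖fderiv ℝ K x‖ ≤ C₀ * ‖x‖ ^ (-(α + 1))) →
        ∀ X V : ℝ → Fin N → EuclideanSpace ℝ (Fin 3),
          (∀ t ∈ Set.Icc (0 : ℝ) T, Function.Injective (X t)) →
          (∀ i : Fin N, ∀ t ∈ Set.Icc (0 : ℝ) T,
            HasDerivWithinAt (fun s => X s i) (V t i) (Set.Icc (0 : ℝ) T) t) →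
          (∀ i : Fin N, ∀ t ∈ Set.Icc (0 : ℝ) T,
            HasDerivWithinAt (fun s => V s i)
              (lam • (-(V t i) + Vtilde K X t i)) (Set.Icc (0 : ℝ) T) t) →
          (∀ t ∈ Set.Icc (0 : ℝ) T,
            Ssum (X t) (α + 1) / N ≤ C₁ ∧ Ssum (X t) α / N ≤ C₁) →
          lam ≥ C →
          ∀ t ∈ Set.Icc (0 : ℝ) T,
            (N : ℝ) ^ (-(1 : ℝ) / 2) *
                Real.sqrt (∑ i : Fin N, ‖V t i - Vtilde K X t i‖ ^ 2) ≤
              (N : ℝ) ^ (-(1 : ℝ) / 2) *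
                  Real.sqrt (∑ i : Fin N, ‖V 0 i - Vtilde K X 0 i‖ ^ 2) *
                  Real.exp (-(lam * t) / 2) +
                C' * min (1 / lam) t := by
  refine ⟨4 * (C₀ * C₁), 4 * (C₀ ^ 2 * C₁ ^ 2), ?_⟩
  intro N hN lam T hlam hT K hK hKb hKd X V hinj hX hV hS hlamC t ht
  obtain ⟨ht0, htT⟩ := ht
  have hIcc : t ∈ Set.Icc (0 : ℝ) T := ⟨ht0, htT⟩
  have hNpos : (0 : ℝ) < N := by
    have : 0 < N := lt_of_lt_of_le (by norm_num) hN
    exact_mod_cast this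
  have hNne : (N : ℝ) ≠ 0 := ne_of_gt hNpos
  -- row sums
  have hrow : ∀ β' : ℝ, ∀ s ∈ Set.Icc (0:ℝ) T, Ssum (X s) β' / N ≤ C₁ →
      ∀ i : Fin N,
        ∑ j ∈ Finset.univ.erase i, (dist (X s i) (X s j)) ^ (-β') ≤ C₁ * N := by
    intro β' s _ hC i
    have h0 : 0 ≤ dmin (X s) :=
      Real.sInf_nonneg (by rintro r ⟨i, j, hij, rfl⟩; exact dist_nonneg)
    have hddnn : ∀ j, 0 ≤ dd (X s) i j := by
      intro j; unfold dd; split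
      · exact h0
      · exact dist_nonneg
    calc ∑ j ∈ Finset.univ.erase i, (dist (X s i) (X s j)) ^ (-β')
        = ∑ j ∈ Finset.univ.erase i, (dd (X s) i j) ^ (-β') := by
          refine Finset.sum_congr rfl fun j hj => ?_
          rw [dd, if_neg (Finset.ne_of_mem_erase hj).symm]
      _ ≤ ∑ j : Fin N, (dd (X s) i j) ^ (-β') := by
          refine Finset.sum_le_sum_of_subset_of_nonneg (Finset.subset_univ _) fun j _ _ =>
            Real.rpow_nonneg (hddnn j) _
      _ ≤ Ssum (X s) β' := by
          rw [Ssum]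
          exact le_ciSup (f := fun i : Fin N => ∑ j : Fin N, (dd (X s) i j) ^ (-β'))
            (Set.Finite.bddAbove (Set.finite_range _)) i
      _ ≤ C₁ * N := by rw [div_le_iff₀ hNpos] at hC; linarith
  -- distinctness
  have hXne : ∀ s ∈ Set.Icc (0:ℝ) T, ∀ i j : Fin N, i ≠ j → X s i - X s j ≠ 0 := by
    intro s hs i j hij
    exact sub_ne_zero.2 ((hinj s hs).ne hij)
  -- uniform bound on Vtilde
  have hVt : ∀ s ∈ Set.Icc (0:ℝ) T, ∀ i : Fin N, ‖Vtilde K X s i‖ ≤ C₀ * C₁ := by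
    intro s hs i
    have h1 : ‖∑ j ∈ Finset.univ.erase i, K (X s i - X s j)‖
        ≤ ∑ j ∈ Finset.univ.erase i, C₀ * (dist (X s i) (X s j)) ^ (-α) := by
      refine norm_sum_le_of_le _ fun j hj => ?_
      rw [dist_eq_norm]
      exact hKb _ (hXne s hs i j (Finset.ne_of_mem_erase hj).symm)
    have h2 : ∑ j ∈ Finset.univ.erase i, C₀ * (dist (X s i) (X s j)) ^ (-α)
        ≤ C₀ * (C₁ * N) := by
      rw [← Finset.mul_sum]
      exact mul_le_mul_of_nonneg_left (hrow α s hs (hS s hs).2 i) hC₀.le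
    rw [Vtilde, norm_smul, norm_inv, Real.norm_natCast]
    calc (N:ℝ)⁻¹ * ‖∑ j ∈ Finset.univ.erase i, K (X s i - X s j)‖
        ≤ (N:ℝ)⁻¹ * (C₀ * (C₁ * N)) :=
          mul_le_mul_of_nonneg_left (h1.trans h2) (by positivity)
      _ = C₀ * C₁ := by field_simp
  -- derivative of Vtilde
  set D : ℝ → Fin N → EuclideanSpace ℝ (Fin 3) := fun s i =>
    (N : ℝ)⁻¹ • ∑ j ∈ Finset.univ.erase i,
      fderiv ℝ K (X s i - X s j) (V s i - V s j) with hDdef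
  have hDer : ∀ i : Fin N, ∀ s ∈ Set.Icc (0:ℝ) T,
      HasDerivWithinAt (fun r => Vtilde K X r i) (D s i) (Set.Icc (0:ℝ) T) s := by
    intro i s hs
    have hterm : ∀ j ∈ Finset.univ.erase i,
        HasDerivWithinAt (fun r => K (X r i - X r j))
          (fderiv ℝ K (X s i - X s j) (V s i - V s j)) (Set.Icc (0:ℝ) T) s := by
      intro j hj
      have hne : X s i - X s j ≠ 0 := hXne s hs i j (Finset.ne_of_mem_erase hj).symm
      have hdiff : DifferentiableAt ℝ K (X s i - X s j) :=
        (hK.contDiffAt (IsOpen.mem_nhds isOpen_ne hne)).differentiableAt one_ne_zero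
      have hsub : HasDerivWithinAt (fun r => X r i - X r j) (V s i - V s j)
          (Set.Icc (0:ℝ) T) s := (hX i s hs).sub (hX j s hs)
      exact hdiff.hasFDerivAt.comp_hasDerivWithinAt s hsub
    exact (HasDerivWithinAt.fun_sum hterm).const_smul ((N:ℝ)⁻¹)
  set Wd : ℝ → Fin N → EuclideanSpace ℝ (Fin 3) := fun s i =>
    lam • (-(V s i) + Vtilde K X s i) - D s i with hWddef
  have hWder : ∀ i : Fin N, ∀ s ∈ Set.Icc (0:ℝ) T,
      HasDerivWithinAt (fun r => V r i - Vtilde K X r i) (Wd s i) (Set.Icc (0:ℝ) T) s :=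
    fun i s hs => (hV i s hs).sub (hDer i s hs)
  set v : ℝ → ℝ := fun s => ∑ i : Fin N, ‖V s i - Vtilde K X s i‖ ^ 2 with hvdef
  set vd : ℝ → ℝ := fun s => ∑ i : Fin N,
    ((inner ℝ (V s i - Vtilde K X s i) (Wd s i) : ℝ)
      + (inner ℝ (Wd s i) (V s i - Vtilde K X s i) : ℝ)) with hvddef
  have hv0 : ∀ s : ℝ, 0 ≤ v s := by
    intro s; apply Finset.sum_nonneg; intro i _; positivity
  have hvder : ∀ s ∈ Set.Icc (0:ℝ) T, HasDerivWithinAt v (vd s) (Set.Icc (0:ℝ) T) s := by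
    intro s hs
    have h : HasDerivWithinAt
        (fun r => ∑ i : Fin N, (inner ℝ (V r i - Vtilde K X r i) (V r i - Vtilde K X r i) : ℝ))
        (∑ i : Fin N, ((inner ℝ (V s i - Vtilde K X s i) (Wd s i) : ℝ)
          + (inner ℝ (Wd s i) (V s i - Vtilde K X s i) : ℝ))) (Set.Icc (0:ℝ) T) s :=
      HasDerivWithinAt.fun_sum fun i _ =>
        HasDerivWithinAt.inner ℝ (hWder i s hs) (hWder i s hs)
    have heq : (fun r => ∑ i : Fin N,
        (inner ℝ (V r i - Vtilde K X r i) (V r i - Vtilde K X r i) : ℝ))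
        = fun r => ∑ i : Fin N, ‖V r i - Vtilde K X r i‖ ^ 2 := by
      funext r
      exact Finset.sum_congr rfl fun i _ => real_inner_self_eq_norm_sq _
    rw [heq] at h
    exact h
  -- norm bound on D
  have hDb : ∀ s ∈ Set.Icc (0:ℝ) T, ∀ i : Fin N,
      ‖D s i‖ ≤ (N:ℝ)⁻¹ * ∑ j ∈ Finset.univ.erase i,
        (C₀ * (dist (X s i) (X s j)) ^ (-(α+1))) *
          (‖V s i - Vtilde K X s i‖ + ‖V s j - Vtilde K X s j‖ + 2 * (C₀ * C₁)) := by
    intro s hs i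
    rw [hDdef]
    rw [norm_smul, norm_inv, Real.norm_natCast]
    refine mul_le_mul_of_nonneg_left ?_ (by positivity)
    refine norm_sum_le_of_le _ fun j hj => ?_
    have hne : X s i - X s j ≠ 0 := hXne s hs i j (Finset.ne_of_mem_erase hj).symm
    have h1 : ‖fderiv ℝ K (X s i - X s j) (V s i - V s j)‖
        ≤ ‖fderiv ℝ K (X s i - X s j)‖ * ‖V s i - V s j‖ :=
      ContinuousLinearMap.le_opNorm _ _
    have h2 : ‖fderiv ℝ K (X s i - X s j)‖ ≤ C₀ * (dist (X s i) (X s j)) ^ (-(α+1)) := by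
      rw [dist_eq_norm]; exact hKd _ hne
    have h3 : ‖V s i - V s j‖ ≤ ‖V s i - Vtilde K X s i‖ + ‖V s j - Vtilde K X s j‖
        + 2 * (C₀ * C₁) := by
      have hrepr : V s i - V s j = (V s i - Vtilde K X s i) - (V s j - Vtilde K X s j)
          + (Vtilde K X s i - Vtilde K X s j) := by abel
      rw [hrepr]
      have ha := norm_add_le ((V s i - Vtilde K X s i) - (V s j - Vtilde K X s j))
        (Vtilde K X s i - Vtilde K X s j)
      have h4 := norm_sub_le (V s i - Vtilde K X s i) (V s j - Vtilde K X s j)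
      have h5 := norm_sub_le (Vtilde K X s i) (Vtilde K X s j)
      have h6 := hVt s hs i
      have h7 := hVt s hs j
      linarith
    calc ‖fderiv ℝ K (X s i - X s j) (V s i - V s j)‖
        ≤ ‖fderiv ℝ K (X s i - X s j)‖ * ‖V s i - V s j‖ := h1
      _ ≤ (C₀ * (dist (X s i) (X s j)) ^ (-(α+1)))
          * (‖V s i - Vtilde K X s i‖ + ‖V s j - Vtilde K X s j‖ + 2 * (C₀ * C₁)) :=
          mul_le_mul h2 h3 (norm_nonneg _) (by positivity)
  -- key quadratic estimate
  have hDW : ∀ s ∈ Set.Icc (0:ℝ) T,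
      ∑ i : Fin N, ‖D s i‖ * ‖V s i - Vtilde K X s i‖ ≤
        2 * (C₀ * C₁) * v s + 2 * (C₀ ^ 2 * C₁ ^ 2) * Real.sqrt N * Real.sqrt (v s) := by
    intro s hs
    have hkey := key_est (fun i j => C₀ * (dist (X s i) (X s j)) ^ (-(α+1)))
        (fun i => ‖V s i - Vtilde K X s i‖) (C₀ * (C₁ * N)) (2 * (C₀ * C₁))
        (fun i j =>
          show (0:ℝ) ≤ C₀ * (dist (X s i) (X s j)) ^ (-(α+1)) by positivity)
        (fun i j =>
          show C₀ * (dist (X s i) (X s j)) ^ (-(α+1))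
              = C₀ * (dist (X s j) (X s i)) ^ (-(α+1)) by rw [dist_comm])
        (fun i => by
          show ∑ j ∈ Finset.univ.erase i, C₀ * (dist (X s i) (X s j)) ^ (-(α+1))
              ≤ C₀ * (C₁ * N)
          rw [← Finset.mul_sum]
          exact mul_le_mul_of_nonneg_left (hrow (α+1) s hs (hS s hs).1 i) hC₀.le)
        (fun i => norm_nonneg _) (by positivity) (by positivity)
    have hstep : ∑ i : Fin N, ‖D s i‖ * ‖V s i - Vtilde K X s i‖
        ≤ ∑ i : Fin N, ((N:ℝ)⁻¹ * ∑ j ∈ Finset.univ.erase i,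
            (C₀ * (dist (X s i) (X s j)) ^ (-(α+1))) *
              (‖V s i - Vtilde K X s i‖ + ‖V s j - Vtilde K X s j‖ + 2 * (C₀ * C₁)))
            * ‖V s i - Vtilde K X s i‖ :=
      Finset.sum_le_sum fun i _ => mul_le_mul_of_nonneg_right (hDb s hs i) (norm_nonneg _)
    have hfact : ∑ i : Fin N, ((N:ℝ)⁻¹ * ∑ j ∈ Finset.univ.erase i,
            (C₀ * (dist (X s i) (X s j)) ^ (-(α+1))) *
              (‖V s i - Vtilde K X s i‖ + ‖V s j - Vtilde K X s j‖ + 2 * (C₀ * C₁)))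
            * ‖V s i - Vtilde K X s i‖
        = (N:ℝ)⁻¹ * ∑ i : Fin N, (∑ j ∈ Finset.univ.erase i,
            (C₀ * (dist (X s i) (X s j)) ^ (-(α+1))) *
              (‖V s i - Vtilde K X s i‖ + ‖V s j - Vtilde K X s j‖ + 2 * (C₀ * C₁)))
            * ‖V s i - Vtilde K X s i‖ := by
      rw [Finset.mul_sum]
      exact Finset.sum_congr rfl fun i _ => by ring
    calc ∑ i : Fin N, ‖D s i‖ * ‖V s i - Vtilde K X s i‖
        ≤ _ := hstep
      _ = _ := hfact
      _ ≤ (N:ℝ)⁻¹ * (2 * (C₀ * (C₁ * N)) * (v s)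
            + (2 * (C₀ * C₁)) * (C₀ * (C₁ * N)) * (Real.sqrt N * Real.sqrt (v s))) :=
          mul_le_mul_of_nonneg_left hkey (by positivity)
      _ = 2 * (C₀ * C₁) * v s
            + 2 * (C₀ ^ 2 * C₁ ^ 2) * Real.sqrt N * Real.sqrt (v s) := by
          field_simp
  have hvd_le : ∀ s ∈ Set.Icc (0:ℝ) T,
      vd s ≤ -(2 * lam) * v s + 2 * (2 * (C₀ * C₁)) * v s
        + 2 * (2 * (C₀ ^ 2 * C₁ ^ 2)) * Real.sqrt N * Real.sqrt (v s) := by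
    intro s hs
    have hper : ∀ i : Fin N,
        (inner ℝ (V s i - Vtilde K X s i) (Wd s i) : ℝ)
          + (inner ℝ (Wd s i) (V s i - Vtilde K X s i) : ℝ)
        ≤ -(2 * lam) * ‖V s i - Vtilde K X s i‖ ^ 2
          + 2 * (‖D s i‖ * ‖V s i - Vtilde K X s i‖) := by
      intro i
      have hWdeq : Wd s i = (-lam) • (V s i - Vtilde K X s i) - D s i := by
        rw [hWddef]
        module
      rw [hWdeq]
      have h1 : (inner ℝ (V s i - Vtilde K X s i)
            ((-lam) • (V s i - Vtilde K X s i) - D s i) : ℝ)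
          = -lam * ‖V s i - Vtilde K X s i‖ ^ 2
            - (inner ℝ (V s i - Vtilde K X s i) (D s i) : ℝ) := by
        rw [inner_sub_right, real_inner_smul_right, real_inner_self_eq_norm_sq]
      have h2 : (inner ℝ ((-lam) • (V s i - Vtilde K X s i) - D s i)
            (V s i - Vtilde K X s i) : ℝ)
          = -lam * ‖V s i - Vtilde K X s i‖ ^ 2
            - (inner ℝ (D s i) (V s i - Vtilde K X s i) : ℝ) := by
        rw [inner_sub_left, real_inner_smul_left, real_inner_self_eq_norm_sq]
      rw [h1, h2]
      have h3 := abs_real_inner_le_norm (V s i - Vtilde K X s i) (D s i)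
      have h4 := abs_real_inner_le_norm (D s i) (V s i - Vtilde K X s i)
      have h3' := neg_abs_le (inner ℝ (V s i - Vtilde K X s i) (D s i) : ℝ)
      have h4' := neg_abs_le (inner ℝ (D s i) (V s i - Vtilde K X s i) : ℝ)
      have hcm : ‖V s i - Vtilde K X s i‖ * ‖D s i‖
          = ‖D s i‖ * ‖V s i - Vtilde K X s i‖ := mul_comm _ _
      linarith
    have hsum : vd s ≤ ∑ i : Fin N, (-(2 * lam) * ‖V s i - Vtilde K X s i‖ ^ 2
        + 2 * (‖D s i‖ * ‖V s i - Vtilde K X s i‖)) :=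
      Finset.sum_le_sum fun i _ => hper i
    have hsplit : ∑ i : Fin N, (-(2 * lam) * ‖V s i - Vtilde K X s i‖ ^ 2
        + 2 * (‖D s i‖ * ‖V s i - Vtilde K X s i‖))
        = -(2 * lam) * v s + 2 * ∑ i : Fin N, ‖D s i‖ * ‖V s i - Vtilde K X s i‖ := by
      rw [Finset.sum_add_distrib, hvdef, Finset.mul_sum, Finset.mul_sum]
    rw [hsplit] at hsum
    have := hDW s hs
    nlinarith [this]
  -- Gronwall comparison
  set b : ℝ := 2 * (C₀ ^ 2 * C₁ ^ 2) with hbdef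
  have hb : 0 < b := by positivity
  set u0 : ℝ := Real.sqrt (v 0) with hu0def
  have hu0 : 0 ≤ u0 := Real.sqrt_nonneg _
  set c : ℝ := 2 * b * Real.sqrt N / lam with hcdef
  have hc : 0 ≤ c := by positivity
  set βf : ℝ → ℝ := fun s => c + (u0 - c) * Real.exp (-(lam * s) / 2) with hβdef
  have hβnn : ∀ s : ℝ, 0 ≤ s → 0 ≤ βf s := by
    intro s hs
    have he1 : Real.exp (-(lam * s) / 2) ≤ 1 := by
      rw [Real.exp_le_one_iff]
      nlinarith
    have he0 : 0 < Real.exp (-(lam * s) / 2) := Real.exp_pos _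
    have hrw : βf s = u0 * Real.exp (-(lam * s) / 2)
        + c * (1 - Real.exp (-(lam * s) / 2)) := by
      show c + (u0 - c) * Real.exp (-(lam * s) / 2) = _
      ring
    rw [hrw]
    have h1 := mul_nonneg hu0 he0.le
    have h2 := mul_nonneg hc (by linarith : (0:ℝ) ≤ 1 - Real.exp (-(lam * s) / 2))
    linarith
  have hgron : ∀ s ∈ Set.Icc (0:ℝ) T, Real.sqrt (v s) ≤ βf s := by
    intro s hs
    refine le_of_forall_pos_le_add ?_
    intro ε hε
    have hBder : ∀ x : ℝ, HasDerivAt (fun r => (βf r + ε) ^ 2)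
        (2 * (βf x + ε) * ((u0 - c) * (Real.exp (-(lam * x) / 2) * (-lam / 2)))) x := by
      intro x
      have h : HasDerivAt (fun r : ℝ => -(lam * r) / 2) (-lam / 2) x := by
        simpa using (((hasDerivAt_id x).const_mul lam).neg.div_const 2)
      have hexp := h.exp
      have hβ : HasDerivAt βf ((u0 - c) * (Real.exp (-(lam * x) / 2) * (-lam / 2))) x := by
        rw [hβdef]
        exact (hexp.const_mul (u0 - c)).const_add c
      have hpow := (hβ.add_const ε).pow 2
      norm_num at hpow
      exact hpow
    have hcomp : ∀ x ∈ Set.Icc (0:ℝ) T, v x ≤ (βf x + ε) ^ 2 := by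
      refine image_le_of_deriv_right_lt_deriv_boundary' (f := v) (f' := vd)
        (B := fun x => (βf x + ε) ^ 2)
        (B' := fun x => 2 * (βf x + ε) * ((u0 - c) * (Real.exp (-(lam * x) / 2) * (-lam / 2))))
        ?_ ?_ ?_ ?_ ?_ ?_
      · exact fun x hx => (hvder x hx).continuousWithinAt
      · intro x hx
        have hmem : Set.Icc (0:ℝ) T ∈ nhdsWithin x (Set.Ici x) :=
          mem_nhdsWithin.2 ⟨Set.Iio T, isOpen_Iio, hx.2,
            fun y hy => ⟨le_trans hx.1 hy.2, hy.1.le⟩⟩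
        exact (hvder x ⟨hx.1, hx.2.le⟩).mono_of_mem_nhdsWithin hmem
      · show v 0 ≤ (βf 0 + ε) ^ 2
        have hβ0 : βf 0 = u0 := by
          show c + (u0 - c) * Real.exp (-(lam * 0) / 2) = u0
          simp
        rw [hβ0]
        have hveq : v 0 = u0 ^ 2 := (Real.sq_sqrt (hv0 0)).symm
        nlinarith [hv0 0, hε, hu0]
      · exact fun x _ => ((hBder x).continuousAt).continuousWithinAt
      · exact fun x _ => (hBder x).hasDerivWithinAt
      · intro x hx hfx
        show vd x < 2 * (βf x + ε) * ((u0 - c) * (Real.exp (-(lam * x) / 2) * (-lam / 2)))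
        have hβx : 0 ≤ βf x := hβnn x hx.1
        have hp : 0 < βf x + ε := by linarith
        have hsq : Real.sqrt (v x) = βf x + ε := by
          rw [hfx, Real.sqrt_sq hp.le]
        have hfx' : v x = (βf x + ε) ^ 2 := hfx
        have hvd := hvd_le x ⟨hx.1, hx.2.le⟩
        rw [hsq, hfx'] at hvd
        have hrel : (u0 - c) * Real.exp (-(lam * x) / 2) = βf x - c := by
          show _ = c + (u0 - c) * Real.exp (-(lam * x) / 2) - c
          ring
        have hlc : lam * c = 2 * b * Real.sqrt N := by
          rw [hcdef]
          field_simp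
        have hR : 2 * (βf x + ε) * ((u0 - c) * (Real.exp (-(lam * x) / 2) * (-lam / 2)))
            = -lam * (βf x + ε) * (βf x)
              + 2 * b * Real.sqrt N * (βf x + ε) := by
          have h9 : 2 * (βf x + ε) * ((u0 - c) * (Real.exp (-(lam * x) / 2) * (-lam / 2)))
              = -lam * (βf x + ε) * ((u0 - c) * Real.exp (-(lam * x) / 2)) := by ring
          rw [h9, hrel, ← hlc]
          ring
        rw [hR]
        have h5 : (2 * (2 * (C₀ * C₁)) - 2 * lam) * (βf x + ε) ^ 2
            ≤ -lam * (βf x + ε) ^ 2 := by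
          nlinarith [sq_nonneg (βf x + ε), hlamC]
        have h6 : -lam * (βf x + ε) ^ 2 < -lam * (βf x + ε) * βf x := by
          nlinarith [mul_pos hlam hp, hε]
        linarith [hvd, h5, h6]
    have hle := hcomp s hs
    calc Real.sqrt (v s) ≤ Real.sqrt ((βf s + ε) ^ 2) := Real.sqrt_le_sqrt hle
      _ = βf s + ε := Real.sqrt_sq (by linarith [hβnn s hs.1])
  -- final assembly
  have hvt := hgron t hIcc
  have hNp : (N:ℝ) ^ (-(1:ℝ)/2) = (Real.sqrt N)⁻¹ := by
    rw [Real.sqrt_eq_rpow, ← Real.rpow_neg (Nat.cast_nonneg N)]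
    norm_num
  have hsqN : (0:ℝ) < Real.sqrt N := Real.sqrt_pos.2 hNpos
  have he0 : 0 < Real.exp (-(lam * t) / 2) := Real.exp_pos _
  have he1 : Real.exp (-(lam * t) / 2) ≤ 1 := by
    rw [Real.exp_le_one_iff]
    nlinarith
  have hmain : (Real.sqrt N)⁻¹ * Real.sqrt (v t)
      ≤ (Real.sqrt N)⁻¹ * Real.sqrt (v 0) * Real.exp (-(lam * t) / 2)
        + (2 * b) * min (1 / lam) t := by
    have hβt : βf t = u0 * Real.exp (-(lam * t) / 2)
        + c * (1 - Real.exp (-(lam * t) / 2)) := by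
      show c + (u0 - c) * Real.exp (-(lam * t) / 2) = _
      ring
    have hstep1 : (Real.sqrt N)⁻¹ * Real.sqrt (v t) ≤ (Real.sqrt N)⁻¹ * βf t :=
      mul_le_mul_of_nonneg_left hvt (by positivity)
    have hc2 : (Real.sqrt N)⁻¹ * (c * (1 - Real.exp (-(lam * t) / 2)))
        ≤ 2 * b * min (1 / lam) t := by
      have heq : (Real.sqrt N)⁻¹ * (c * (1 - Real.exp (-(lam * t) / 2)))
          = (2 * b / lam) * (1 - Real.exp (-(lam * t) / 2)) := by
        rw [hcdef]
        field_simp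
      rw [heq]
      rcases le_total (1 / lam) t with hmin | hmin
      · rw [min_eq_left hmin]
        have h1 : (2 * b / lam) * (1 - Real.exp (-(lam * t) / 2)) ≤ (2 * b / lam) * 1 :=
          mul_le_mul_of_nonneg_left (by linarith) (by positivity)
        have h2 : (2 * b / lam) * 1 = 2 * b * (1 / lam) := by ring
        linarith
      · rw [min_eq_right hmin]
        have hexp_ge : 1 - Real.exp (-(lam * t) / 2) ≤ lam * t / 2 := by
          have := Real.add_one_le_exp (-(lam * t) / 2)
          linarith
        have h1 : (2 * b / lam) * (1 - Real.exp (-(lam * t) / 2))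
            ≤ (2 * b / lam) * (lam * t / 2) :=
          mul_le_mul_of_nonneg_left hexp_ge (by positivity)
        have h2 : (2 * b / lam) * (lam * t / 2) = b * t := by
          field_simp
        nlinarith [hb, ht0]
    have hsplit2 : (Real.sqrt N)⁻¹ * βf t
        = (Real.sqrt N)⁻¹ * Real.sqrt (v 0) * Real.exp (-(lam * t) / 2)
          + (Real.sqrt N)⁻¹ * (c * (1 - Real.exp (-(lam * t) / 2))) := by
      rw [hβt, hu0def]
      ring
    linarith [hstep1, hc2, hsplit2.le, hsplit2.ge]
  have hC' : (4 : ℝ) * (C₀ ^ 2 * C₁ ^ 2) = 2 * b := by rw [hbdef]; ring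
  rw [hNp, hC']
  exact hmain
end
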